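/- arXiv:0709.2045 — 2 statements merged into one kernel-verified Lean document; each statement's English description precedes it below -/
import Mathlib

section
/- Given matrix factorizations W₁·1 = E₁J₁ = J₁E₁ and W₂·1 = E₂J₂ = J₂E₂ (with E_i, J_i square matrices of sizes r₁ and r₂ in disjoint sets of variables), the tensor-product construction E = [[E₁⊗1, 1⊗E₂],[1⊗J₂, −J₁⊗1]], J = [[J₁⊗1, 1⊗E₂],[1⊗J₂, −E₁⊗1]] satisfies E·J = (W₁+W₂)·1. -/
/-!
By the mixed-product rule `(A ⊗ B) (C ⊗ D) = AC ⊗ BD`, the diagonal blocks of the product are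
`E₁J₁ ⊗ 1 + 1 ⊗ E₂J₂` and `1 ⊗ J₂E₂ + J₁E₁ ⊗ 1`, both `(W₁ + W₂) • 1`, while the off-diagonal
blocks are `E₁ ⊗ E₂ - E₁ ⊗ E₂` and `J₁ ⊗ J₂ - J₁ ⊗ J₂`, because `A ⊗ 1` and `1 ⊗ B` commute.
-/

open Matrix MvPolynomial Kronecker

variable {R S : Type*} [CommRing R] [CommRing S] {n p : Type*} [DecidableEq n] [DecidableEq p]

theorem Matrix.map_smul_one (f : R →+* S) (w : R) :
    (w • (1 : Matrix n n R)).map f = f w • 1 := by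
  rw [Matrix.map_smul' f w 1 (map_mul f), Matrix.map_one f f.map_zero f.map_one]

variable [Fintype n] [Fintype p]

def IsMatrixFactorization (w : R) (E J : Matrix n n R) : Prop :=
  E * J = w • 1 ∧ J * E = w • 1

namespace IsMatrixFactorization

theorem map {w : R} {E J : Matrix n n R} (h : IsMatrixFactorization w E J) (f : R →+* S) :
    IsMatrixFactorization (f w) (E.map f) (J.map f) := by
  constructor <;> rw [← Matrix.map_mul, ← Matrix.map_smul_one]
  exacts [congrArg (Matrix.map · f) h.1, congrArg (Matrix.map · f) h.2]

theorem fromBlocks_kronecker_mul {w₁ w₂ : R} {E₁ J₁ : Matrix n n R} {E₂ J₂ : Matrix p p R}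
    (h₁ : IsMatrixFactorization w₁ E₁ J₁) (h₂ : IsMatrixFactorization w₂ E₂ J₂) :
    fromBlocks (E₁ ⊗ₖ (1 : Matrix p p R)) ((1 : Matrix n n R) ⊗ₖ E₂)
        ((1 : Matrix n n R) ⊗ₖ J₂) (-(J₁ ⊗ₖ (1 : Matrix p p R))) *
      fromBlocks (J₁ ⊗ₖ (1 : Matrix p p R)) ((1 : Matrix n n R) ⊗ₖ E₂)
        ((1 : Matrix n n R) ⊗ₖ J₂) (-(E₁ ⊗ₖ (1 : Matrix p p R))) =
      (w₁ + w₂) • 1 := by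
  rw [fromBlocks_multiply]
  simp only [Matrix.mul_neg, Matrix.neg_mul, neg_neg, ← mul_kronecker_mul, one_mul, mul_one,
    h₁.1, h₁.2, h₂.1, h₂.2, smul_kronecker, kronecker_smul, one_kronecker_one, add_neg_cancel]
  rw [← fromBlocks_one, fromBlocks_smul, smul_zero, add_smul, add_comm (w₂ • _)]

end IsMatrixFactorization

theorem stmt2 (m l r₁ r₂ : ℕ)
    (W₁ : MvPolynomial (Fin m) ℂ) (W₂ : MvPolynomial (Fin l) ℂ)
    (E₁ J₁ : Matrix (Fin r₁) (Fin r₁) (MvPolynomial (Fin m) ℂ))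
    (E₂ J₂ : Matrix (Fin r₂) (Fin r₂) (MvPolynomial (Fin l) ℂ))
    (h1 : E₁ * J₁ = W₁ • 1) (h1' : J₁ * E₁ = W₁ • 1)
    (h2 : E₂ * J₂ = W₂ • 1) (h2' : J₂ * E₂ = W₂ • 1) :
    let R := MvPolynomial (Fin m ⊕ Fin l) ℂ
    let e₁ : Matrix (Fin r₁) (Fin r₁) R := E₁.map ⇑(rename Sum.inl)
    let j₁ : Matrix (Fin r₁) (Fin r₁) R := J₁.map ⇑(rename Sum.inl)
    let e₂ : Matrix (Fin r₂) (Fin r₂) R := E₂.map ⇑(rename Sum.inr)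
    let j₂ : Matrix (Fin r₂) (Fin r₂) R := J₂.map ⇑(rename Sum.inr)
    fromBlocks (e₁ ⊗ₖ (1 : Matrix (Fin r₂) (Fin r₂) R))
        ((1 : Matrix (Fin r₁) (Fin r₁) R) ⊗ₖ e₂)
        ((1 : Matrix (Fin r₁) (Fin r₁) R) ⊗ₖ j₂)
        (-(j₁ ⊗ₖ (1 : Matrix (Fin r₂) (Fin r₂) R))) *
      fromBlocks (j₁ ⊗ₖ (1 : Matrix (Fin r₂) (Fin r₂) R))
        ((1 : Matrix (Fin r₁) (Fin r₁) R) ⊗ₖ e₂)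
        ((1 : Matrix (Fin r₁) (Fin r₁) R) ⊗ₖ j₂)
        (-(e₁ ⊗ₖ (1 : Matrix (Fin r₂) (Fin r₂) R))) =
      (rename Sum.inl W₁ + rename Sum.inr W₂) • 1 := by
  intro R e₁ j₁ e₂ j₂
  have hf₁ : IsMatrixFactorization (rename Sum.inl W₁ : R) e₁ j₁ :=
    IsMatrixFactorization.map ⟨h1, h1'⟩ (rename (R := ℂ) Sum.inl).toRingHom
  have hf₂ : IsMatrixFactorization (rename Sum.inr W₂ : R) e₂ j₂ :=
    IsMatrixFactorization.map ⟨h2, h2'⟩ (rename (R := ℂ) Sum.inr).toRingHom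
  exact hf₁.fromBlocks_kronecker_mul hf₂
end

section
/- For the quartic torus relation: if α₁ = Θ₁(2u,2τ), α₂ = Θ₄(2u,2τ), α₃ = (Θ₄(2τ)²/(Θ₂(2τ)Θ₃(2τ)))·Θ₂(2u,2τ)Θ₃(2u,2τ), and a = (Θ₂(2τ)⁴+Θ₃(2τ)⁴)/(Θ₂(2τ)²Θ₃(2τ)²), then α₁⁴ + α₂⁴ − α₃² − a·α₁²α₂² = 0. -/
/-- Jacobi theta function with characteristics:
`Θ[c₁,c₂](u,τ) = ∑ₘ exp(πiτ(m+c₁)²) · exp(2πi(u+c₂)(m+c₁))`. -/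
noncomputable def jacobiThetaChar (c₁ c₂ : ℝ) (u τ : ℂ) : ℂ :=
  ∑' m : ℤ, Complex.exp ((Real.pi : ℂ) * Complex.I * τ * ((m : ℂ) + (c₁ : ℂ)) ^ 2) *
    Complex.exp (2 * (Real.pi : ℂ) * Complex.I * (u + (c₂ : ℂ)) * ((m : ℂ) + (c₁ : ℂ)))

noncomputable def theta1 (u τ : ℂ) : ℂ := jacobiThetaChar (1/2) (1/2) u τ
noncomputable def theta2 (u τ : ℂ) : ℂ := jacobiThetaChar (1/2) 0 u τ
noncomputable def theta3 (u τ : ℂ) : ℂ := jacobiThetaChar 0 0 u τ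
noncomputable def theta4 (u τ : ℂ) : ℂ := jacobiThetaChar 0 (1/2) u τ


open Complex Real

noncomputable section
def evenSet : Set (ℤ × ℤ) := {p | (p.1 + p.2) % 2 = 0}

def eEven : ℤ × ℤ ≃ evenSet where
  toFun jk := ⟨(jk.1 + jk.2, jk.1 - jk.2), by simp [evenSet]; omega⟩
  invFun p := ((p.1.1 + p.1.2) / 2, (p.1.1 - p.1.2) / 2)
  left_inv jk := by obtain ⟨j, k⟩ := jk; simp [Prod.ext_iff]; omega
  right_inv p := by
    obtain ⟨⟨m, n⟩, hp⟩ := p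
    simp only [evenSet, Set.mem_setOf_eq] at hp
    apply Subtype.ext; simp [Prod.ext_iff]; omega

def eOdd : ℤ × ℤ ≃ ↥(evenSetᶜ) where
  toFun jk := ⟨(jk.1 + jk.2 + 1, jk.1 - jk.2), by simp [evenSet]; omega⟩
  invFun p := ((p.1.1 + p.1.2 - 1) / 2, (p.1.1 - p.1.2 - 1) / 2)
  left_inv jk := by obtain ⟨j, k⟩ := jk; simp [Prod.ext_iff]; omega
  right_inv p := by
    obtain ⟨⟨m, n⟩, hp⟩ := p
    simp only [evenSet, Set.mem_compl_iff, Set.mem_setOf_eq] at hp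
    apply Subtype.ext; simp [Prod.ext_iff]; omega

lemma term_even (z w τ : ℂ) (j k : ℤ) :
    jacobiTheta₂_term (j + k) z τ * jacobiTheta₂_term (j - k) w τ =
      jacobiTheta₂_term j (z + w) (2 * τ) * jacobiTheta₂_term k (z - w) (2 * τ) := by
  simp only [jacobiTheta₂_term, ← Complex.exp_add]
  congr 1
  push_cast
  ring

lemma term_odd (z w τ : ℂ) (j k : ℤ) :
    jacobiTheta₂_term (j + k + 1) z τ * jacobiTheta₂_term (j - k) w τ =
      cexp (π * I * τ + 2 * π * I * z) *
        (jacobiTheta₂_term j (z + w + τ) (2 * τ) * jacobiTheta₂_term k (z - w + τ) (2 * τ)) := by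
  simp only [jacobiTheta₂_term, ← Complex.exp_add]
  congr 1
  push_cast
  ring

lemma two_tau_im {τ : ℂ} (hτ : 0 < τ.im) : 0 < (2 * τ).im := by
  have : (2 * τ).im = 2 * τ.im := by simp [Complex.mul_im]
  rw [this]; linarith

lemma summable_norm_theta_term {τ : ℂ} (hτ : 0 < τ.im) (z : ℂ) :
    Summable fun n : ℤ => ‖jacobiTheta₂_term n z τ‖ :=
  summable_norm_iff.mpr ((summable_jacobiTheta₂_term_iff z τ).mpr hτ)

lemma summable_theta_prod {τ : ℂ} (hτ : 0 < τ.im) (z w : ℂ) :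
    Summable fun x : ℤ × ℤ => jacobiTheta₂_term x.1 z τ * jacobiTheta₂_term x.2 w τ := by
  have h3 := (summable_norm_theta_term hτ z).mul_of_nonneg (summable_norm_theta_term hτ w)
    (fun _ => norm_nonneg _) (fun _ => norm_nonneg _)
  rw [← summable_norm_iff]
  simpa only [norm_mul] using h3

lemma hasSum_theta_prod {τ : ℂ} (hτ : 0 < τ.im) (z w : ℂ) :
    HasSum (fun p : ℤ × ℤ => jacobiTheta₂_term p.1 z τ * jacobiTheta₂_term p.2 w τ)
      (jacobiTheta₂ z τ * jacobiTheta₂ w τ) := by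
  have h := (hasSum_jacobiTheta₂_term z hτ).mul (hasSum_jacobiTheta₂_term w hτ)
    (summable_theta_prod hτ z w)
  exact h

theorem theta_prod_formula {τ : ℂ} (hτ : 0 < τ.im) (z w : ℂ) :
    jacobiTheta₂ z τ * jacobiTheta₂ w τ =
      jacobiTheta₂ (z + w) (2 * τ) * jacobiTheta₂ (z - w) (2 * τ) +
      cexp (π * I * τ + 2 * π * I * z) *
        (jacobiTheta₂ (z + w + τ) (2 * τ) * jacobiTheta₂ (z - w + τ) (2 * τ)) := by
  have h2 : 0 < (2 * τ).im := two_tau_im hτ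
  have hF := hasSum_theta_prod hτ z w
  have hEv : HasSum ((fun p : ℤ × ℤ =>
      jacobiTheta₂_term p.1 z τ * jacobiTheta₂_term p.2 w τ) ∘ ((↑) : evenSet → ℤ × ℤ))
      (jacobiTheta₂ (z + w) (2 * τ) * jacobiTheta₂ (z - w) (2 * τ)) := by
    rw [← eEven.hasSum_iff]
    have h := hasSum_theta_prod h2 (z + w) (z - w)
    have he : ((fun p : ℤ × ℤ =>
        jacobiTheta₂_term p.1 z τ * jacobiTheta₂_term p.2 w τ) ∘ ((↑) : evenSet → ℤ × ℤ))
          ∘ eEven = fun jk : ℤ × ℤ =>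
        jacobiTheta₂_term jk.1 (z + w) (2 * τ) * jacobiTheta₂_term jk.2 (z - w) (2 * τ) := by
      funext jk
      simp only [Function.comp_apply, eEven, Equiv.coe_fn_mk]
      exact term_even z w τ jk.1 jk.2
    rw [he]
    exact h
  have hOd : HasSum ((fun p : ℤ × ℤ =>
      jacobiTheta₂_term p.1 z τ * jacobiTheta₂_term p.2 w τ) ∘ ((↑) : ↥(evenSetᶜ) → ℤ × ℤ))
      (cexp (π * I * τ + 2 * π * I * z) *
        (jacobiTheta₂ (z + w + τ) (2 * τ) * jacobiTheta₂ (z - w + τ) (2 * τ))) := by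
    rw [← eOdd.hasSum_iff]
    have h := (hasSum_theta_prod h2 (z + w + τ) (z - w + τ)).mul_left
      (cexp (π * I * τ + 2 * π * I * z))
    have he : ((fun p : ℤ × ℤ =>
        jacobiTheta₂_term p.1 z τ * jacobiTheta₂_term p.2 w τ) ∘ ((↑) : ↥(evenSetᶜ) → ℤ × ℤ))
          ∘ eOdd = fun jk : ℤ × ℤ => cexp (π * I * τ + 2 * π * I * z) *
        (jacobiTheta₂_term jk.1 (z + w + τ) (2 * τ) *
          jacobiTheta₂_term jk.2 (z - w + τ) (2 * τ)) := by
      funext jk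
      simp only [Function.comp_apply, eOdd, Equiv.coe_fn_mk]
      exact term_odd z w τ jk.1 jk.2
    rw [he]
    exact h
  exact hF.unique (hEv.add_compl hOd)

section squares
variable {σ : ℂ} (v : ℂ)

lemma sqA (hσ : 0 < σ.im) : (jacobiTheta₂ v σ) ^ 2 =
    jacobiTheta₂ (2 * v) (2 * σ) * jacobiTheta₂ 0 (2 * σ) +
      cexp (π * I * σ + 2 * π * I * v) *
        (jacobiTheta₂ (2 * v + σ) (2 * σ) * jacobiTheta₂ σ (2 * σ)) := by
  have h := theta_prod_formula hσ v v
  rw [show v + v = 2 * v from by ring, show v - v = (0 : ℂ) from by ring] at h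
  rw [zero_add] at h
  rw [sq]
  linear_combination h

lemma sqB (hσ : 0 < σ.im) : (jacobiTheta₂ (v + 1/2) σ) ^ 2 =
    jacobiTheta₂ (2 * v) (2 * σ) * jacobiTheta₂ 0 (2 * σ) -
      cexp (π * I * σ + 2 * π * I * v) *
        (jacobiTheta₂ (2 * v + σ) (2 * σ) * jacobiTheta₂ σ (2 * σ)) := by
  have h := theta_prod_formula hσ (v + 1/2) (v + 1/2)
  rw [show v + 1/2 + (v + 1/2) = 2 * v + 1 from by ring,
    show v + 1/2 - (v + 1/2) = (0 : ℂ) from by ring] at h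
  rw [show 2 * v + 1 + σ = 2 * v + σ + 1 from by ring] at h
  simp only [jacobiTheta₂_add_left, zero_add] at h
  have hexp : cexp (π * I * σ + 2 * π * I * (v + 1/2)) = -cexp (π * I * σ + 2 * π * I * v) := by
    rw [show π * I * σ + 2 * π * I * (v + 1/2) = π * I * σ + 2 * π * I * v + π * I from by ring,
      Complex.exp_add, Complex.exp_pi_mul_I]
    ring
  rw [hexp] at h
  rw [sq]
  linear_combination h

lemma sqC (hσ : 0 < σ.im) : (jacobiTheta₂ (v + σ/2) σ) ^ 2 =
    jacobiTheta₂ (2 * v + σ) (2 * σ) * jacobiTheta₂ 0 (2 * σ) +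
      cexp (-(2 * π * I * v)) *
        (jacobiTheta₂ (2 * v) (2 * σ) * jacobiTheta₂ σ (2 * σ)) := by
  have h := theta_prod_formula hσ (v + σ/2) (v + σ/2)
  rw [show v + σ/2 + (v + σ/2) = 2 * v + σ from by ring,
    show v + σ/2 - (v + σ/2) = (0 : ℂ) from by ring] at h
  rw [show 2 * v + σ + σ = 2 * v + 2 * σ from by ring] at h
  rw [jacobiTheta₂_add_left', zero_add] at h
  have hexp : cexp (π * I * σ + 2 * π * I * (v + σ/2)) * cexp (-π * I * (2 * σ + 2 * (2 * v))) =
      cexp (-(2 * π * I * v)) := by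
    rw [← Complex.exp_add]; congr 1; ring
  rw [sq]
  linear_combination h + (jacobiTheta₂ (2 * v) (2 * σ) * jacobiTheta₂ σ (2 * σ)) * hexp

lemma sqD (hσ : 0 < σ.im) : (jacobiTheta₂ (v + σ/2 + 1/2) σ) ^ 2 =
    jacobiTheta₂ (2 * v + σ) (2 * σ) * jacobiTheta₂ 0 (2 * σ) -
      cexp (-(2 * π * I * v)) *
        (jacobiTheta₂ (2 * v) (2 * σ) * jacobiTheta₂ σ (2 * σ)) := by
  have h := theta_prod_formula hσ (v + σ/2 + 1/2) (v + σ/2 + 1/2)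
  rw [show v + σ/2 + 1/2 + (v + σ/2 + 1/2) = 2 * v + σ + 1 from by ring,
    show v + σ/2 + 1/2 - (v + σ/2 + 1/2) = (0 : ℂ) from by ring] at h
  rw [show 2 * v + σ + 1 + σ = 2 * v + 2 * σ + 1 from by ring] at h
  simp only [jacobiTheta₂_add_left, zero_add] at h
  rw [jacobiTheta₂_add_left'] at h
  have hexp : cexp (π * I * σ + 2 * π * I * (v + σ/2 + 1/2)) *
      cexp (-π * I * (2 * σ + 2 * (2 * v))) = -cexp (-(2 * π * I * v)) := by
    rw [← Complex.exp_add,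
      show π * I * σ + 2 * π * I * (v + σ/2 + 1/2) + -π * I * (2 * σ + 2 * (2 * v)) =
        -(2 * π * I * v) + π * I from by ring,
      Complex.exp_add, Complex.exp_pi_mul_I]
    ring
  rw [sq]
  linear_combination h + (jacobiTheta₂ (2 * v) (2 * σ) * jacobiTheta₂ σ (2 * σ)) * hexp

end squares

def negInv : ℤ ≃ ℤ where
  toFun n := -1 - n
  invFun n := -1 - n
  left_inv n := by simp only []; omega
  right_inv n := by simp only []; omega

lemma theta_zero (τ : ℂ) : jacobiTheta₂ (1/2 + τ/2) τ = 0 := by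
  have key : ∀ n : ℤ, jacobiTheta₂_term (-1 - n) (1/2 + τ/2) τ =
      -jacobiTheta₂_term n (1/2 + τ/2) τ := by
    intro n
    simp only [jacobiTheta₂_term]
    calc cexp (2 * π * I * (-1 - n : ℤ) * (1/2 + τ/2) + π * I * (-1 - n : ℤ) ^ 2 * τ)
        = cexp ((2 * π * I * n * (1/2 + τ/2) + π * I * n ^ 2 * τ) +
            ((-n : ℤ) : ℂ) * (2 * π * I) + -(π * I)) := by
          congr 1; push_cast; ring
      _ = cexp (2 * π * I * n * (1/2 + τ/2) + π * I * n ^ 2 * τ) *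
            cexp (((-n : ℤ) : ℂ) * (2 * π * I)) * cexp (-(π * I)) := by
          rw [Complex.exp_add, Complex.exp_add]
      _ = -cexp (2 * π * I * n * (1/2 + τ/2) + π * I * n ^ 2 * τ) := by
          rw [Complex.exp_int_mul_two_pi_mul_I, Complex.exp_neg, Complex.exp_pi_mul_I]
          norm_num
  have h := (negInv.tsum_eq (fun n => jacobiTheta₂_term n (1/2 + τ/2) τ)).symm
  have h2 : jacobiTheta₂ (1/2 + τ/2) τ = -jacobiTheta₂ (1/2 + τ/2) τ := by
    conv_lhs => rw [jacobiTheta₂, h]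
    have : (fun n : ℤ => jacobiTheta₂_term (negInv n) (1/2 + τ/2) τ) =
        fun n : ℤ => -jacobiTheta₂_term n (1/2 + τ/2) τ := by
      funext n; exact key n
    rw [this, tsum_neg]
    rfl
  linear_combination h2 / 2

lemma theta_sub_one (z τ : ℂ) : jacobiTheta₂ (z - 1) τ = jacobiTheta₂ z τ := by
  have h := jacobiTheta₂_add_left (z - 1) τ
  rw [sub_add_cancel] at h
  exact h.symm

lemma descent34 {μ : ℂ} (hμ : 0 < μ.im) :
    jacobiTheta₂ 0 μ * jacobiTheta₂ (1/2) μ = (jacobiTheta₂ (1/2) (2 * μ)) ^ 2 := by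
  have h := theta_prod_formula hμ 0 (1/2)
  rw [show (0 : ℂ) + 1/2 + μ = 1/2 + (2 * μ)/2 from by ring, theta_zero] at h
  rw [show (0 : ℂ) - 1/2 + μ = 1/2 + (2 * μ)/2 - 1 from by ring, theta_sub_one, theta_zero] at h
  rw [zero_add, show (0 : ℂ) - 1/2 = -(1/2) from by ring, jacobiTheta₂_neg_left] at h
  simp only [zero_mul, mul_zero, add_zero] at h
  rw [sq]
  exact h

lemma geom_int_hasSum {r : ℝ} (hr0 : 0 ≤ r) (hr1 : r < 1) :
    HasSum (fun n : ℤ => if n = 0 then (0 : ℝ) else r ^ n.natAbs)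
      (r / (1 - r) + 0 + r / (1 - r)) := by
  have hgeo : HasSum (fun k : ℕ => r ^ (k + 1)) (r / (1 - r)) := by
    have h := (hasSum_geometric_of_lt_one hr0 hr1).mul_left r
    have he : (fun k : ℕ => r * r ^ k) = fun k : ℕ => r ^ (k + 1) := by
      funext k; rw [pow_succ]; ring
    rw [he] at h
    rwa [div_eq_mul_inv]
  refine HasSum.of_add_one_of_neg_add_one ?_ ?_
  · have he : (fun n : ℕ => if (n : ℤ) + 1 = 0 then (0 : ℝ) else r ^ ((n : ℤ) + 1).natAbs) =
        fun k : ℕ => r ^ (k + 1) := by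
      funext k
      rw [if_neg (by omega), show ((k : ℤ) + 1).natAbs = k + 1 from by omega]
    rw [he]; exact hgeo
  · have he : (fun n : ℕ => if -((n : ℤ) + 1) = 0 then (0 : ℝ) else r ^ (-((n : ℤ) + 1)).natAbs) =
        fun k : ℕ => r ^ (k + 1) := by
      funext k
      rw [if_neg (by omega), show (-((k : ℤ) + 1)).natAbs = k + 1 from by omega]
    rw [he]; exact hgeo

lemma norm_le_geom {r : ℝ} (hr0 : 0 ≤ r) (hr1 : r < 1) {g : ℤ → ℂ} {s : ℂ}
    (hg : HasSum g s) (hb : ∀ n : ℤ, ‖g n‖ ≤ if n = 0 then 0 else r ^ n.natAbs) :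
    ‖s‖ ≤ 2 * (r / (1 - r)) := by
  have hh := geom_int_hasSum hr0 hr1
  have hsn : Summable fun n : ℤ => ‖g n‖ :=
    Summable.of_nonneg_of_le (fun n => norm_nonneg _) hb hh.summable
  calc ‖s‖ = ‖∑' n, g n‖ := by rw [hg.tsum_eq]
    _ ≤ ∑' n, ‖g n‖ := norm_tsum_le_tsum_norm hsn
    _ ≤ ∑' n : ℤ, (if n = 0 then (0 : ℝ) else r ^ n.natAbs) := Summable.tsum_le_tsum hb hsn hh.summable
    _ = r / (1 - r) + 0 + r / (1 - r) := hh.tsum_eq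
    _ = 2 * (r / (1 - r)) := by ring

lemma rexp_neg_pi_lt : rexp (-π) < 1/3 := by
  have h1 : rexp (-π) < rexp (-3) := by
    apply Real.exp_lt_exp.mpr
    have := Real.pi_gt_three
    linarith
  have h2 : (4 : ℝ) ≤ rexp 3 := by
    have := Real.add_one_le_exp (3 : ℝ)
    linarith
  have h3 : rexp (-3 : ℝ) ≤ 1/4 := by
    rw [Real.exp_neg]
    have h4 : ((4 : ℝ))⁻¹ = 1/4 := by norm_num
    rw [← h4]
    exact inv_anti₀ (by norm_num) h2
  linarith

lemma far4 {τ : ℂ} (ht : 1 ≤ τ.im) : jacobiTheta₂ (1/2) τ ≠ 0 := by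
  have hτ : 0 < τ.im := lt_of_lt_of_le one_pos ht
  set r := rexp (-π * τ.im) with hr_def
  have hr0 : 0 ≤ r := (Real.exp_pos _).le
  have hrπ : r ≤ rexp (-π) := by
    apply Real.exp_le_exp.mpr
    nlinarith [Real.pi_pos]
  have hr1 : r < 1 := lt_of_le_of_lt hrπ (lt_trans rexp_neg_pi_lt (by norm_num))
  have hδ : HasSum (fun n : ℤ => if n = 0 then (1 : ℂ) else 0) 1 := hasSum_ite_eq 0 1
  have hg := (hasSum_jacobiTheta₂_term (1/2 : ℂ) hτ).sub hδ
  have hb : ∀ n : ℤ, ‖jacobiTheta₂_term n (1/2) τ - (if n = 0 then (1 : ℂ) else 0)‖ ≤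
      if n = 0 then 0 else r ^ n.natAbs := by
    intro n
    by_cases h0 : n = 0
    · subst h0
      simp [jacobiTheta₂_term]
    · rw [if_neg h0, if_neg h0, sub_zero, norm_jacobiTheta₂_term]
      have him : (1/2 : ℂ).im = 0 := by norm_num [Complex.div_im]
      rw [him]
      have hk : r ^ n.natAbs = rexp (-π * τ.im * n.natAbs) := by
        rw [hr_def, ← Real.exp_nat_mul]; congr 1; ring
      rw [hk]
      apply Real.exp_le_exp.mpr
      have habs : ((n.natAbs : ℝ)) = |(n : ℝ)| := by
        rw [Nat.cast_natAbs, Int.cast_abs]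
      have hone : (1 : ℝ) ≤ (n.natAbs : ℝ) := by
        have : 1 ≤ n.natAbs := Nat.one_le_iff_ne_zero.mpr (Int.natAbs_ne_zero.mpr h0)
        exact_mod_cast this
      have h1 : (n.natAbs : ℝ) ≤ (n : ℝ) ^ 2 := by
        have hsq : (n.natAbs : ℝ) ^ 2 = (n : ℝ) ^ 2 := by rw [habs, _root_.sq_abs]
        nlinarith
      nlinarith [mul_le_mul_of_nonneg_left h1 (mul_pos Real.pi_pos hτ).le]
  have hbound := norm_le_geom hr0 hr1 hg hb
  intro hzero
  rw [hzero] at hbound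
  simp only [zero_sub, norm_neg, norm_one] at hbound
  have h1r : 0 < 1 - r := by linarith
  have hb2 : (1 : ℝ) ≤ 2 * r / (1 - r) := by rw [mul_div_assoc]; exact hbound
  have h3 := (le_div_iff₀ h1r).mp hb2
  have := rexp_neg_pi_lt
  linarith

lemma far2 {τ : ℂ} (ht : 1 ≤ τ.im) : jacobiTheta₂ (τ/2) τ ≠ 0 := by
  have hτ : 0 < τ.im := lt_of_lt_of_le one_pos ht
  set r := rexp (-π * τ.im) with hr_def
  have hr0 : 0 ≤ r := (Real.exp_pos _).le
  have hrπ : r ≤ rexp (-π) := by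
    apply Real.exp_le_exp.mpr
    nlinarith [Real.pi_pos]
  have hr1 : r < 1 := lt_of_le_of_lt hrπ (lt_trans rexp_neg_pi_lt (by norm_num))
  have hδ0 : HasSum (fun n : ℤ => if n = 0 then (1 : ℂ) else 0) 1 := hasSum_ite_eq 0 1
  have hδ1 : HasSum (fun n : ℤ => if n = -1 then (1 : ℂ) else 0) 1 := hasSum_ite_eq (-1) 1
  have hg := ((hasSum_jacobiTheta₂_term (τ/2) hτ).sub hδ0).sub hδ1
  have him : (τ/2).im = τ.im / 2 := by
    rw [show τ/2 = τ * (1/2) from by ring, Complex.mul_im]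
    norm_num
    ring
  have hb : ∀ n : ℤ, ‖jacobiTheta₂_term n (τ/2) τ - (if n = 0 then (1 : ℂ) else 0) -
      (if n = -1 then (1 : ℂ) else 0)‖ ≤ if n = 0 then 0 else r ^ n.natAbs := by
    intro n
    by_cases h0 : n = 0
    · subst h0; simp [jacobiTheta₂_term]
    · rw [if_neg h0]
      by_cases h1 : n = -1
      · subst h1
        have hterm : jacobiTheta₂_term (-1) (τ/2) τ = 1 := by
          rw [jacobiTheta₂_term,
            show 2 * ↑π * I * ((-1 : ℤ) : ℂ) * (τ/2) + ↑π * I * ((-1 : ℤ) : ℂ) ^ 2 * τ = 0 from by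
              push_cast; ring, Complex.exp_zero]
        rw [hterm, if_neg h0, if_pos rfl]
        have h00 : ((1 : ℂ) - 0 - 1) = 0 := by ring
        rw [h00, norm_zero]
        positivity
      · rw [if_neg h0, if_neg h1, sub_zero, sub_zero, norm_jacobiTheta₂_term, him]
        have hk : r ^ n.natAbs = rexp (-π * τ.im * n.natAbs) := by
          rw [hr_def, ← Real.exp_nat_mul]; congr 1; ring
        rw [hk]
        apply Real.exp_le_exp.mpr
        have hZ : |n| ≤ n ^ 2 + n := by
          rcases le_or_gt 0 n with h | h
          · rw [abs_of_nonneg h]; nlinarith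
          · have h2 : n ≤ -2 := by omega
            rw [abs_of_neg h]
            nlinarith [mul_nonneg (by linarith : (0:ℤ) ≤ -n) (by linarith : (0:ℤ) ≤ -(n+2))]
        have habs : ((n.natAbs : ℝ)) = |(n : ℝ)| := by rw [Nat.cast_natAbs, Int.cast_abs]
        have hR : (n.natAbs : ℝ) ≤ (n : ℝ) ^ 2 + n := by
          rw [habs]
          exact_mod_cast hZ
        nlinarith [mul_le_mul_of_nonneg_left hR (mul_pos Real.pi_pos hτ).le]
  have hbound := norm_le_geom hr0 hr1 hg hb
  intro hzero
  rw [hzero] at hbound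
  simp only [zero_sub] at hbound
  have hn2 : ‖(-1 : ℂ) - 1‖ = 2 := by norm_num
  rw [hn2] at hbound
  have h1r : 0 < 1 - r := by linarith
  have hb2 : (2 : ℝ) ≤ 2 * r / (1 - r) := by rw [mul_div_assoc]; exact hbound
  have h3 := (le_div_iff₀ h1r).mp hb2
  have := rexp_neg_pi_lt
  linarith

lemma pow2_im (n : ℕ) (σ : ℂ) : ((2 : ℂ) ^ n * σ).im = 2 ^ n * σ.im := by
  rw [show ((2 : ℂ) ^ n) = (((2 ^ n : ℝ) : ℂ)) from by push_cast; ring, Complex.mul_im,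
    Complex.ofReal_re, Complex.ofReal_im]
  ring

lemma chain4 {σ : ℂ} (hσ : 0 < σ.im) (h0 : jacobiTheta₂ (1/2) σ = 0) : False := by
  have key : ∀ n : ℕ, jacobiTheta₂ (1/2) ((2 : ℂ) ^ n * σ) = 0 := by
    intro n
    induction n with
    | zero => simpa using h0
    | succ n ih =>
      have him : 0 < ((2 : ℂ) ^ n * σ).im := by rw [pow2_im]; positivity
      have hd := descent34 him
      rw [ih, mul_zero] at hd
      have hz : jacobiTheta₂ (1/2) (2 * ((2 : ℂ) ^ n * σ)) = 0 :=
        pow_eq_zero_iff two_ne_zero |>.mp hd.symm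
      rw [show (2 : ℂ) * ((2 : ℂ) ^ n * σ) = (2 : ℂ) ^ (n + 1) * σ from by ring] at hz
      exact hz
  obtain ⟨n, hn⟩ : ∃ n : ℕ, 1/σ.im < 2 ^ n := pow_unbounded_of_one_lt _ one_lt_two
  have hle : 1 ≤ ((2 : ℂ) ^ n * σ).im := by
    rw [pow2_im]
    rw [div_lt_iff₀ hσ] at hn
    nlinarith
  exact far4 hle (key n)

lemma nz4 {σ : ℂ} (hσ : 0 < σ.im) : jacobiTheta₂ (1/2) σ ≠ 0 := fun h => chain4 hσ h

lemma nz3 {σ : ℂ} (hσ : 0 < σ.im) : jacobiTheta₂ 0 σ ≠ 0 := by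
  intro h
  have hd := descent34 hσ
  rw [h, zero_mul] at hd
  have hz : jacobiTheta₂ (1/2) (2 * σ) = 0 := pow_eq_zero_iff two_ne_zero |>.mp hd.symm
  exact chain4 (two_tau_im hσ) hz

lemma descent2 {μ : ℂ} (hμ : 0 < μ.im) :
    (jacobiTheta₂ (μ/2) μ) ^ 2 =
      2 * (jacobiTheta₂ 0 (2 * μ) * jacobiTheta₂ μ (2 * μ)) := by
  have h := sqC 0 hμ
  rw [zero_add] at h
  simp only [mul_zero, zero_add, neg_zero, Complex.exp_zero, one_mul] at h
  rw [h]; ring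

lemma chain2 {σ : ℂ} (hσ : 0 < σ.im) (h0 : jacobiTheta₂ (σ/2) σ = 0) : False := by
  have key : ∀ n : ℕ, jacobiTheta₂ (((2 : ℂ) ^ n * σ)/2) ((2 : ℂ) ^ n * σ) = 0 := by
    intro n
    induction n with
    | zero => simpa using h0
    | succ n ih =>
      have him : 0 < ((2 : ℂ) ^ n * σ).im := by rw [pow2_im]; positivity
      have hd := descent2 him
      rw [ih] at hd
      have h2im : 0 < (2 * ((2 : ℂ) ^ n * σ)).im := two_tau_im him
      have hz : jacobiTheta₂ ((2 : ℂ) ^ n * σ) (2 * ((2 : ℂ) ^ n * σ)) = 0 := by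
        have hprod : (2 : ℂ) * (jacobiTheta₂ 0 (2 * ((2 : ℂ) ^ n * σ)) *
            jacobiTheta₂ ((2 : ℂ) ^ n * σ) (2 * ((2 : ℂ) ^ n * σ))) = 0 := by
          linear_combination -hd
        have hprod' := (mul_eq_zero.mp hprod).resolve_left two_ne_zero
        rcases mul_eq_zero.mp hprod' with hc | hc
        · exact absurd hc (nz3 h2im)
        · exact hc
      rw [show (2 : ℂ) ^ (n + 1) * σ = 2 * ((2 : ℂ) ^ n * σ) from by ring,
        show (2 * ((2 : ℂ) ^ n * σ))/2 = (2 : ℂ) ^ n * σ from by ring]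
      exact hz
  obtain ⟨n, hn⟩ : ∃ n : ℕ, 1/σ.im < 2 ^ n := pow_unbounded_of_one_lt _ one_lt_two
  have hle : 1 ≤ ((2 : ℂ) ^ n * σ).im := by
    rw [pow2_im]
    rw [div_lt_iff₀ hσ] at hn
    nlinarith
  exact far2 hle (key n)

lemma nz2 {σ : ℂ} (hσ : 0 < σ.im) : jacobiTheta₂ (σ/2) σ ≠ 0 := fun h => chain2 hσ h

lemma theta3_eq (u τ : ℂ) : theta3 u τ = jacobiTheta₂ u τ := by
  unfold theta3 jacobiThetaChar jacobiTheta₂ jacobiTheta₂_term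
  refine tsum_congr fun m => ?_
  rw [← Complex.exp_add]
  congr 1
  push_cast
  ring

lemma theta4_eq (u τ : ℂ) : theta4 u τ = jacobiTheta₂ (u + 1/2) τ := by
  unfold theta4 jacobiThetaChar jacobiTheta₂ jacobiTheta₂_term
  refine tsum_congr fun m => ?_
  rw [← Complex.exp_add]
  congr 1
  push_cast
  ring

lemma theta2_eq (u τ : ℂ) :
    theta2 u τ = cexp (π * I * τ/4 + π * I * u) * jacobiTheta₂ (u + τ/2) τ := by
  unfold theta2 jacobiThetaChar jacobiTheta₂ jacobiTheta₂_term
  rw [← tsum_mul_left]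
  refine tsum_congr fun m => ?_
  rw [← Complex.exp_add, ← Complex.exp_add]
  congr 1
  push_cast
  ring

lemma theta1_eq (u τ : ℂ) :
    theta1 u τ = cexp (π * I * τ/4 + π * I * u + π * I/2) *
      jacobiTheta₂ (u + 1/2 + τ/2) τ := by
  unfold theta1 jacobiThetaChar jacobiTheta₂ jacobiTheta₂_term
  rw [← tsum_mul_left]
  refine tsum_congr fun m => ?_
  rw [← Complex.exp_add, ← Complex.exp_add]
  congr 1
  push_cast
  ring

theorem stmt15 (u τ : ℂ) (hτ : 0 < τ.im) :
    let α₁ := theta1 (2 * u) (2 * τ)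
    let α₂ := theta4 (2 * u) (2 * τ)
    let α₃ := (theta4 0 (2 * τ)) ^ 2 / (theta2 0 (2 * τ) * theta3 0 (2 * τ)) *
      (theta2 (2 * u) (2 * τ) * theta3 (2 * u) (2 * τ))
    let a := ((theta2 0 (2 * τ)) ^ 4 + (theta3 0 (2 * τ)) ^ 4) /
      ((theta2 0 (2 * τ)) ^ 2 * (theta3 0 (2 * τ)) ^ 2)
    α₁ ^ 4 + α₂ ^ 4 - α₃ ^ 2 - a * α₁ ^ 2 * α₂ ^ 2 = 0 := by
  intro α₁ α₂ α₃ a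
  have hσ : 0 < (2 * τ).im := two_tau_im hτ
  -- exponential atoms
  have hx1 : cexp (π * I * (2 * τ)/2) * cexp (π * I * (2 * τ)/4 + π * I * (2 * u)) ^ 2 =
      cexp (π * I * (2 * τ) + 2 * π * I * (2 * u)) := by
    rw [sq, ← Complex.exp_add, ← Complex.exp_add]; congr 1; ring
  have hx3 : cexp (π * I * (2 * τ)/2) *
      cexp (π * I * (2 * τ)/4 + π * I * (2 * u) + π * I/2) ^ 2 =
      -cexp (π * I * (2 * τ) + 2 * π * I * (2 * u)) := by
    rw [sq, ← Complex.exp_add, ← Complex.exp_add,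
      show π * I * (2 * τ)/2 + (π * I * (2 * τ)/4 + π * I * (2 * u) + π * I/2 +
        (π * I * (2 * τ)/4 + π * I * (2 * u) + π * I/2)) =
        π * I * (2 * τ) + 2 * π * I * (2 * u) + π * I from by ring,
      Complex.exp_add, Complex.exp_pi_mul_I]
    ring
  have hx4 : cexp (π * I * (2 * τ) + 2 * π * I * (2 * u)) * cexp (-(2 * π * I * (2 * u))) =
      cexp (π * I * (2 * τ)/2) ^ 2 := by
    rw [sq, ← Complex.exp_add, ← Complex.exp_add]; congr 1; ring
  have hE0 : cexp (π * I * (2 * τ) + 2 * π * I * 0) = cexp (π * I * (2 * τ)/2) ^ 2 := by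
    rw [sq, ← Complex.exp_add]; congr 1; ring
  have hcB : cexp (π * I * (2 * τ)/4 + π * I * 0) ^ 2 = cexp (π * I * (2 * τ)/2) := by
    rw [sq, ← Complex.exp_add]; congr 1; ring
  have he : cexp (π * I * (2 * τ)/2) ≠ 0 := Complex.exp_ne_zero _
  -- square identities
  have h3 : theta3 (2 * u) (2 * τ) ^ 2 =
      jacobiTheta₂ (2 * (2 * u)) (2 * (2 * τ)) * jacobiTheta₂ 0 (2 * (2 * τ)) +
        cexp (π * I * (2 * τ) + 2 * π * I * (2 * u)) *
          (jacobiTheta₂ (2 * (2 * u) + 2 * τ) (2 * (2 * τ)) *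
            jacobiTheta₂ (2 * τ) (2 * (2 * τ))) := by
    rw [theta3_eq]; exact sqA (2 * u) hσ
  have h4 : theta4 (2 * u) (2 * τ) ^ 2 =
      jacobiTheta₂ (2 * (2 * u)) (2 * (2 * τ)) * jacobiTheta₂ 0 (2 * (2 * τ)) -
        cexp (π * I * (2 * τ) + 2 * π * I * (2 * u)) *
          (jacobiTheta₂ (2 * (2 * u) + 2 * τ) (2 * (2 * τ)) *
            jacobiTheta₂ (2 * τ) (2 * (2 * τ))) := by
    rw [theta4_eq]; exact sqB (2 * u) hσ
  have h2 : theta2 (2 * u) (2 * τ) ^ 2 =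
      (cexp (π * I * (2 * τ) + 2 * π * I * (2 * u)) *
          (jacobiTheta₂ (2 * (2 * u) + 2 * τ) (2 * (2 * τ)) * jacobiTheta₂ 0 (2 * (2 * τ))) +
        cexp (π * I * (2 * τ)/2) ^ 2 *
          (jacobiTheta₂ (2 * (2 * u)) (2 * (2 * τ)) * jacobiTheta₂ (2 * τ) (2 * (2 * τ)))) /
        cexp (π * I * (2 * τ)/2) := by
    rw [eq_div_iff he, theta2_eq, mul_pow, sqC (2 * u) hσ]
    linear_combination (cexp (π * I * (2 * τ)/2) *
        (jacobiTheta₂ (2 * (2 * u) + 2 * τ) (2 * (2 * τ)) * jacobiTheta₂ 0 (2 * (2 * τ)) +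
          cexp (-(2 * π * I * (2 * u))) *
            (jacobiTheta₂ (2 * (2 * u)) (2 * (2 * τ)) *
              jacobiTheta₂ (2 * τ) (2 * (2 * τ))))) * (mul_comm
        (cexp (π * I * (2 * τ)/2)) (cexp (π * I * (2 * τ)/4 + π * I * (2 * u)) ^ 2)) +
      (jacobiTheta₂ (2 * (2 * u) + 2 * τ) (2 * (2 * τ)) * jacobiTheta₂ 0 (2 * (2 * τ)) +
        cexp (-(2 * π * I * (2 * u))) * (jacobiTheta₂ (2 * (2 * u)) (2 * (2 * τ)) *
          jacobiTheta₂ (2 * τ) (2 * (2 * τ)))) * hx1 +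
      (jacobiTheta₂ (2 * (2 * u)) (2 * (2 * τ)) * jacobiTheta₂ (2 * τ) (2 * (2 * τ))) * hx4
  have h1 : theta1 (2 * u) (2 * τ) ^ 2 =
      (-(cexp (π * I * (2 * τ) + 2 * π * I * (2 * u)) *
          (jacobiTheta₂ (2 * (2 * u) + 2 * τ) (2 * (2 * τ)) * jacobiTheta₂ 0 (2 * (2 * τ)))) +
        cexp (π * I * (2 * τ)/2) ^ 2 *
          (jacobiTheta₂ (2 * (2 * u)) (2 * (2 * τ)) * jacobiTheta₂ (2 * τ) (2 * (2 * τ)))) /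
        cexp (π * I * (2 * τ)/2) := by
    rw [eq_div_iff he, theta1_eq,
      show 2 * u + 1/2 + (2 * τ)/2 = 2 * u + (2 * τ)/2 + 1/2 from by ring, mul_pow,
      sqD (2 * u) hσ]
    linear_combination (cexp (π * I * (2 * τ)/2) *
        (jacobiTheta₂ (2 * (2 * u) + 2 * τ) (2 * (2 * τ)) * jacobiTheta₂ 0 (2 * (2 * τ)) -
          cexp (-(2 * π * I * (2 * u))) *
            (jacobiTheta₂ (2 * (2 * u)) (2 * (2 * τ)) *
              jacobiTheta₂ (2 * τ) (2 * (2 * τ))))) * (mul_comm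
        (cexp (π * I * (2 * τ)/2))
        (cexp (π * I * (2 * τ)/4 + π * I * (2 * u) + π * I/2) ^ 2)) +
      (jacobiTheta₂ (2 * (2 * u) + 2 * τ) (2 * (2 * τ)) * jacobiTheta₂ 0 (2 * (2 * τ)) -
        cexp (-(2 * π * I * (2 * u))) * (jacobiTheta₂ (2 * (2 * u)) (2 * (2 * τ)) *
          jacobiTheta₂ (2 * τ) (2 * (2 * τ)))) * hx3 +
      (jacobiTheta₂ (2 * (2 * u)) (2 * (2 * τ)) * jacobiTheta₂ (2 * τ) (2 * (2 * τ))) * hx4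
  have hC : theta3 0 (2 * τ) ^ 2 = jacobiTheta₂ 0 (2 * (2 * τ)) ^ 2 +
      cexp (π * I * (2 * τ)/2) ^ 2 * jacobiTheta₂ (2 * τ) (2 * (2 * τ)) ^ 2 := by
    rw [theta3_eq]
    have h := sqA 0 hσ
    rw [show (2 : ℂ) * 0 = 0 from by ring, zero_add, hE0] at h
    rw [h]; ring
  have hD : theta4 0 (2 * τ) ^ 2 = jacobiTheta₂ 0 (2 * (2 * τ)) ^ 2 -
      cexp (π * I * (2 * τ)/2) ^ 2 * jacobiTheta₂ (2 * τ) (2 * (2 * τ)) ^ 2 := by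
    rw [theta4_eq, zero_add]
    have h := sqB 0 hσ
    rw [show (2 : ℂ) * 0 = 0 from by ring, zero_add, hE0] at h
    rw [h]; ring
  have hB : theta2 0 (2 * τ) ^ 2 = 2 * cexp (π * I * (2 * τ)/2) *
      (jacobiTheta₂ 0 (2 * (2 * τ)) * jacobiTheta₂ (2 * τ) (2 * (2 * τ))) := by
    rw [theta2_eq, zero_add, mul_pow]
    have h := sqC 0 hσ
    rw [show (2 : ℂ) * 0 = 0 from by ring,
      show -(2 * π * I * (0 : ℂ)) = 0 from by ring, Complex.exp_zero, one_mul] at h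
    simp only [zero_add] at h
    rw [h]
    linear_combination (jacobiTheta₂ (2 * τ) (2 * (2 * τ)) * jacobiTheta₂ 0 (2 * (2 * τ)) +
      jacobiTheta₂ 0 (2 * (2 * τ)) * jacobiTheta₂ (2 * τ) (2 * (2 * τ))) * hcB
  have hB0 : theta2 0 (2 * τ) ≠ 0 := by
    rw [theta2_eq]
    exact mul_ne_zero (Complex.exp_ne_zero _) (by rw [zero_add]; exact nz2 hσ)
  have hC0 : theta3 0 (2 * τ) ≠ 0 := by rw [theta3_eq]; exact nz3 hσ
  have key : theta2 0 (2 * τ) ^ 2 * theta3 0 (2 * τ) ^ 2 *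
        ((theta1 (2 * u) (2 * τ) ^ 2) ^ 2 + (theta4 (2 * u) (2 * τ) ^ 2) ^ 2) -
      (theta4 0 (2 * τ) ^ 2) ^ 2 *
        (theta2 (2 * u) (2 * τ) ^ 2 * theta3 (2 * u) (2 * τ) ^ 2) -
      ((theta2 0 (2 * τ) ^ 2) ^ 2 + (theta3 0 (2 * τ) ^ 2) ^ 2) *
        (theta1 (2 * u) (2 * τ) ^ 2 * theta4 (2 * u) (2 * τ) ^ 2) = 0 := by
    rw [h1, h2, h3, h4, hB, hC, hD]
    field_simp
    ring
  have expand : theta1 (2 * u) (2 * τ) ^ 4 + theta4 (2 * u) (2 * τ) ^ 4 -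
      (theta4 0 (2 * τ) ^ 2 / (theta2 0 (2 * τ) * theta3 0 (2 * τ)) *
        (theta2 (2 * u) (2 * τ) * theta3 (2 * u) (2 * τ))) ^ 2 -
      (theta2 0 (2 * τ) ^ 4 + theta3 0 (2 * τ) ^ 4) /
        (theta2 0 (2 * τ) ^ 2 * theta3 0 (2 * τ) ^ 2) *
        theta1 (2 * u) (2 * τ) ^ 2 * theta4 (2 * u) (2 * τ) ^ 2 =
      (theta2 0 (2 * τ) ^ 2 * theta3 0 (2 * τ) ^ 2 *
        ((theta1 (2 * u) (2 * τ) ^ 2) ^ 2 + (theta4 (2 * u) (2 * τ) ^ 2) ^ 2) -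
      (theta4 0 (2 * τ) ^ 2) ^ 2 *
        (theta2 (2 * u) (2 * τ) ^ 2 * theta3 (2 * u) (2 * τ) ^ 2) -
      ((theta2 0 (2 * τ) ^ 2) ^ 2 + (theta3 0 (2 * τ) ^ 2) ^ 2) *
        (theta1 (2 * u) (2 * τ) ^ 2 * theta4 (2 * u) (2 * τ) ^ 2)) /
      (theta2 0 (2 * τ) ^ 2 * theta3 0 (2 * τ) ^ 2) := by
    field_simp
  show theta1 (2 * u) (2 * τ) ^ 4 + theta4 (2 * u) (2 * τ) ^ 4 -
      (theta4 0 (2 * τ) ^ 2 / (theta2 0 (2 * τ) * theta3 0 (2 * τ)) *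
        (theta2 (2 * u) (2 * τ) * theta3 (2 * u) (2 * τ))) ^ 2 -
      (theta2 0 (2 * τ) ^ 4 + theta3 0 (2 * τ) ^ 4) /
        (theta2 0 (2 * τ) ^ 2 * theta3 0 (2 * τ) ^ 2) *
        theta1 (2 * u) (2 * τ) ^ 2 * theta4 (2 * u) (2 * τ) ^ 2 = 0
  rw [expand, key, zero_div]
end
end
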